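/- Let a < b be reals, let U_n be an (n+1)-dimensional subspace of C^n([a,b],ℝ) with a Bernstein basis p_{n,0},…,p_{n,n}, let f_0 ∈ U_n be strictly positive on [a,b], and suppose D_{f_0}U_n := { (f/f_0)′ : f ∈ U_n } has a Bernstein basis q_{n-1,0},…,q_{n-1,n-1}. Define c_0 := 0, q_{n-1,-1} := 0, d_n := 0, q_{n-1,n} := 0; for k = 1,…,n define c_k := p_{n,k}^{(k)}(a) / (f_0(a) · q_{n-1,k-1}^{(k-1)}(a)), and for k = 0,…,n−1 define d_k := p_{n,k}^{(n−k)}(b) / (f_0(b) · q_{n-1,k}^{(n−1−k)}(b)). Then each such c_k and d_k is nonzero, and for every k = 0,…,n one has (p_{n,k}/f_0)′(x) = c_k q_{n-1,k-1}(x) + d_k q_{n-1,k}(x) for all x ∈ [a,b]; moreover c_k equals the limit as x ↓ a of (p_{n,k})′(x) / (f_0(a) q_{n-1,k-1}(x)) for k ≥ 1, and d_k equals the limit as x ↑ b of (p_{n,k})′(x) / (f_0(b) q_{n-1,k}(x)) for k ≤ n−1. -/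

import Mathlib

/-!
Write `(p_k / f₀)' = ∑ λ_j q_j`. Since `p_k` vanishes to order `k` at `a`, Leibniz' rule shows
that `(p_k / f₀)'` vanishes to order `k - 1` at `a`, with `(k - 1)`-st derivative
`p_k^{(k)}(a) / f₀(a)`. The `q_j` vanish at `a` to the pairwise distinct exact orders `j`, so
comparing derivatives at `a` one order at a time forces `λ_j = 0` for `j < k - 1` and
`λ_{k-1} = c_k`. At `b` the `q_j` vanish to the distinct orders `n - 1 - j`, and the same
argument gives `λ_j = 0` for `j > k` and `λ_k = d_k`. The one-sided limits are quotients of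
leading Taylor coefficients.
-/

open Set Filter Topology

section Leibniz

variable {𝕜 : Type*} [NontriviallyNormedField 𝕜] {𝔸 : Type*} [NormedRing 𝔸] [NormedAlgebra 𝕜 𝔸]
  {m : ℕ} {f g : 𝕜 → 𝔸} {x : 𝕜}

theorem iteratedDeriv_mul_of_iteratedDeriv_eq_zero (hf : ContDiffAt 𝕜 m f x)
    (hg : ContDiffAt 𝕜 m g x) (h0 : ∀ i < m, iteratedDeriv i f x = 0) :
    iteratedDeriv m (fun y => f y * g y) x = iteratedDeriv m f x * g x := by
  rw [iteratedDeriv_fun_mul hf hg, Finset.sum_range_succ,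
    Finset.sum_eq_zero fun i hi => by rw [h0 i (Finset.mem_range.1 hi), mul_zero, zero_mul]]
  simp

end Leibniz

theorem iteratedDeriv_div_of_iteratedDeriv_eq_zero {𝕜 : Type*} [NontriviallyNormedField 𝕜]
    {m : ℕ} {f g : 𝕜 → 𝕜} {x : 𝕜} (hf : ContDiffAt 𝕜 m f x)
    (hg : ContDiffAt 𝕜 m g x) (hgx : g x ≠ 0) (h0 : ∀ i < m, iteratedDeriv i f x = 0) :
    iteratedDeriv m (fun y => f y / g y) x = iteratedDeriv m f x / g x := by
  simpa only [div_eq_mul_inv] using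
    iteratedDeriv_mul_of_iteratedDeriv_eq_zero (g := fun y => (g y)⁻¹) hf (hg.inv hgx) h0

theorem tendsto_div_pow_of_iteratedDeriv_eq_zero {f : ℝ → ℝ} {x₀ : ℝ} {m : ℕ}
    (hf : ContDiffAt ℝ m f x₀) (h0 : ∀ i < m, iteratedDeriv i f x₀ = 0) :
    Tendsto (fun x => f x / (x - x₀) ^ m) (𝓝[≠] x₀) (𝓝 (iteratedDeriv m f x₀ / m.factorial)) := by
  obtain ⟨u, hu, hfu⟩ := hf.contDiffOn le_rfl (by simp)
  obtain ⟨ε, hε, hεu⟩ := Metric.mem_nhds_iff.1 hu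
  have hball : IsOpen (Metric.ball x₀ ε) := Metric.isOpen_ball
  have hx₀ : x₀ ∈ Metric.ball x₀ ε := Metric.mem_ball_self hε
  have htaylor : ∀ x, taylorWithinEval f m (Metric.ball x₀ ε) x₀ x
      = iteratedDeriv m f x₀ / m.factorial * (x - x₀) ^ m := by
    intro x
    rw [taylor_within_apply, Finset.sum_range_succ, Finset.sum_eq_zero fun i hi => by
      rw [iteratedDerivWithin_of_isOpen hball hx₀, h0 i (Finset.mem_range.1 hi), smul_zero],
      iteratedDerivWithin_of_isOpen hball hx₀, smul_eq_mul]
    ring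
  have hrem := Real.taylor_tendsto (convex_ball x₀ ε) hx₀ (hfu.mono hεu)
  rw [hball.nhdsWithin_eq hx₀] at hrem
  have := (hrem.mono_left (nhdsWithin_le_nhds (s := {x₀}ᶜ))).add_const
    (iteratedDeriv m f x₀ / m.factorial)
  rw [zero_add] at this
  refine this.congr' ?_
  filter_upwards [self_mem_nhdsWithin] with x hx
  have : (x - x₀) ^ m ≠ 0 := pow_ne_zero _ (sub_ne_zero.2 hx)
  rw [htaylor]
  field_simp
  ring

theorem tendsto_div_of_iteratedDeriv_eq_zero {f g : ℝ → ℝ} {x₀ : ℝ} {m : ℕ}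
    (hf : ContDiffAt ℝ m f x₀) (hg : ContDiffAt ℝ m g x₀)
    (hf0 : ∀ i < m, iteratedDeriv i f x₀ = 0) (hg0 : ∀ i < m, iteratedDeriv i g x₀ = 0)
    (hgm : iteratedDeriv m g x₀ ≠ 0) :
    Tendsto (fun x => f x / g x) (𝓝[≠] x₀)
      (𝓝 (iteratedDeriv m f x₀ / iteratedDeriv m g x₀)) := by
  have hfact : (m.factorial : ℝ) ≠ 0 := Nat.cast_ne_zero.2 m.factorial_ne_zero
  have := (tendsto_div_pow_of_iteratedDeriv_eq_zero hf hf0).div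
    (tendsto_div_pow_of_iteratedDeriv_eq_zero hg hg0) (div_ne_zero hgm hfact)
  rw [div_div_div_cancel_right₀ hfact] at this
  refine this.congr' ?_
  filter_upwards [self_mem_nhdsWithin] with x hx
  exact div_div_div_cancel_right₀ (pow_ne_zero _ (sub_ne_zero.2 hx)) _ _

theorem tendsto_deriv_div_const_mul {f Q : ℝ → ℝ} {x₀ C : ℝ} {r : ℕ}
    (hf : ContDiffAt ℝ (r + 1 : ℕ) f x₀) (hQ : ContDiffAt ℝ r Q x₀)
    (hf0 : ∀ i < r + 1, iteratedDeriv i f x₀ = 0) (hQ0 : ∀ i < r, iteratedDeriv i Q x₀ = 0)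
    (hC : C ≠ 0) (hQr : iteratedDeriv r Q x₀ ≠ 0) :
    Tendsto (fun x => deriv f x / (C * Q x)) (𝓝[≠] x₀)
      (𝓝 (iteratedDeriv (r + 1) f x₀ / (C * iteratedDeriv r Q x₀))) := by
  simpa only [iteratedDeriv_succ', iteratedDeriv_const_mul_field] using
    tendsto_div_of_iteratedDeriv_eq_zero (hf.derivWithin le_rfl) (contDiffAt_const.mul hQ)
      (fun i hi => by rw [← iteratedDeriv_succ']; exact hf0 _ (by omega))
      (fun i hi => by rw [iteratedDeriv_const_mul_field, hQ0 i hi, mul_zero])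
      (by rw [iteratedDeriv_const_mul_field]; exact mul_ne_zero hC hQr)

section DistinctOrders

variable {𝕜 : Type*} [NontriviallyNormedField 𝕜] {ι : Type*} [Fintype ι]
  {Q : ι → 𝕜 → 𝕜} {c : ι → 𝕜} {ord : ι → ℕ} {x₀ : 𝕜}

theorem iteratedDeriv_lincomb_eq_of_coeff_eq_zero (hord : ord.Injective) (j₀ : ι)
    (hQ : ∀ j, ContDiffAt 𝕜 (ord j₀) (Q j) x₀)
    (hQ0 : ∀ j, ∀ i < ord j, iteratedDeriv i (Q j) x₀ = 0)
    (hc : ∀ j, ord j < ord j₀ → c j = 0) :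
    iteratedDeriv (ord j₀) (fun x => ∑ j, c j * Q j x) x₀
      = c j₀ * iteratedDeriv (ord j₀) (Q j₀) x₀ := by
  rw [iteratedDeriv_fun_sum fun j _ => contDiffAt_const.mul (hQ j)]
  simp only [iteratedDeriv_const_mul_field]
  refine Finset.sum_eq_single j₀ (fun j _ hj => ?_) fun h => (h (Finset.mem_univ j₀)).elim
  rcases (hord.ne hj).lt_or_gt with hlt | hgt
  · rw [hc j hlt, zero_mul]
  · rw [hQ0 j _ hgt, mul_zero]

theorem coeff_eq_zero_of_iteratedDeriv_lincomb_eq_zero (hord : ord.Injective) {r : ℕ}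
    (hQ : ∀ j, ContDiffAt 𝕜 r (Q j) x₀)
    (hQ0 : ∀ j, ∀ i < ord j, iteratedDeriv i (Q j) x₀ = 0)
    (hQj : ∀ j, iteratedDeriv (ord j) (Q j) x₀ ≠ 0)
    (hG : ∀ i < r, iteratedDeriv i (fun x => ∑ j, c j * Q j x) x₀ = 0) :
    ∀ j, ord j < r → c j = 0 := by
  intro j
  induction hj : ord j using Nat.strong_induction_on generalizing j with
  | _ m ih =>
    intro hmr
    subst hj
    have := iteratedDeriv_lincomb_eq_of_coeff_eq_zero hord j
      (fun l => (hQ l).of_le (by exact_mod_cast hmr.le)) hQ0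
      fun l hl => ih _ hl l rfl (hl.trans hmr)
    rw [hG _ hmr] at this
    exact (mul_eq_zero.1 this.symm).resolve_right (hQj j)

theorem coeff_of_deriv_div_eq_lincomb (hord : ord.Injective) {r : ℕ} {f g : 𝕜 → 𝕜}
    (hQ : ∀ j, ContDiffAt 𝕜 r (Q j) x₀)
    (hQ0 : ∀ j, ∀ i < ord j, iteratedDeriv i (Q j) x₀ = 0)
    (hQj : ∀ j, iteratedDeriv (ord j) (Q j) x₀ ≠ 0)
    (hf : ContDiffAt 𝕜 (r + 1 : ℕ) f x₀) (hg : ContDiffAt 𝕜 (r + 1 : ℕ) g x₀) (hgx : g x₀ ≠ 0)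
    (hf0 : ∀ i < r + 1, iteratedDeriv i f x₀ = 0)
    (hG : deriv (fun y => f y / g y) = fun x => ∑ j, c j * Q j x) :
    (∀ j, ord j < r → c j = 0) ∧
      ∀ j, ord j = r → c j = iteratedDeriv (r + 1) f x₀ / (g x₀ * iteratedDeriv r (Q j) x₀) := by
  have hGi : ∀ i ≤ r, iteratedDeriv i (fun x => ∑ j, c j * Q j x) x₀
      = iteratedDeriv (i + 1) f x₀ / g x₀ := by
    intro i hi
    have hir : ((i + 1 : ℕ) : WithTop ℕ∞) ≤ ((r + 1 : ℕ) : WithTop ℕ∞) := by exact_mod_cast by omega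
    rw [← hG, ← iteratedDeriv_succ']
    exact iteratedDeriv_div_of_iteratedDeriv_eq_zero (hf.of_le hir) (hg.of_le hir) hgx
      fun l hl => hf0 l (by omega)
  have hzero := coeff_eq_zero_of_iteratedDeriv_lincomb_eq_zero hord hQ hQ0 hQj fun i hi => by
    rw [hGi i hi.le, hf0 (i + 1) (by omega), zero_div]
  refine ⟨hzero, fun j hj => ?_⟩
  subst hj
  have := iteratedDeriv_lincomb_eq_of_coeff_eq_zero hord j hQ hQ0 hzero
  rw [hGi _ le_rfl, div_eq_iff hgx] at this
  rw [eq_div_iff (mul_ne_zero hgx (hQj j)), this]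
  ring

end DistinctOrders

theorem sum_fin_ite_adjacent_mul {R : Type*} [Semiring R] {n k : ℕ} (hk : k ≤ n) (c d : R)
    (v : ℕ → R) :
    ∑ j : Fin n, ((if (j : ℕ) + 1 = k then c else 0) + (if (j : ℕ) = k then d else 0)) * v j
      = c * (if k = 0 then 0 else v (k - 1)) + d * (if k = n then 0 else v k) := by
  rw [Fin.sum_univ_eq_sum_range
    (fun j => ((if j + 1 = k then c else 0) + (if j = k then d else 0)) * v j) n]
  rcases k with _ | k <;>
    simp only [Nat.add_eq_zero_iff, Nat.add_right_cancel_iff, one_ne_zero, and_false, ↓reduceIte,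
      zero_add, add_mul, ite_mul, zero_mul, Finset.sum_add_distrib, Finset.sum_ite_eq',
      Finset.mem_range, add_tsub_cancel_right, mul_ite, mul_zero] <;>
    split_ifs <;> first | rfl | omega

theorem bernstein_lincomb_coeff_eq {n k : ℕ} {a b : ℝ} {f g : ℝ → ℝ} {q : ℕ → ℝ → ℝ}
    {lam : Fin n → ℝ} {c d : ℝ} (hk : k ≤ n)
    (hf : ContDiff ℝ (n : ℕ∞) f) (hg : ContDiff ℝ (n : ℕ∞) g) (hga : g a ≠ 0) (hgb : g b ≠ 0)
    (hfa : ∀ j < k, iteratedDeriv j f a = 0) (hfb : ∀ j < n - k, iteratedDeriv j f b = 0)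
    (hqa : ∀ j < n, ContDiffAt ℝ (n - 1 : ℕ) (q j) a)
    (hqb : ∀ j < n, ContDiffAt ℝ (n - 1 : ℕ) (q j) b)
    (hqzero : ∀ j < n,
      (∀ i < j, iteratedDeriv i (q j) a = 0) ∧ iteratedDeriv j (q j) a ≠ 0 ∧
      (∀ i < n - 1 - j, iteratedDeriv i (q j) b = 0) ∧ iteratedDeriv (n - 1 - j) (q j) b ≠ 0)
    (hc : 1 ≤ k → c = iteratedDeriv k f a / (g a * iteratedDeriv (k - 1) (q (k - 1)) a))
    (hd : k < n → d = iteratedDeriv (n - k) f b / (g b * iteratedDeriv (n - 1 - k) (q k) b))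
    (hG : deriv (fun y => f y / g y) = fun x => ∑ j : Fin n, lam j * q j x) (j : Fin n) :
    lam j = (if (j : ℕ) + 1 = k then c else 0) + (if (j : ℕ) = k then d else 0) := by
  have hcd : ∀ {m : ℕ}, m ≤ n → ∀ x, ContDiffAt ℝ m f x ∧ ContDiffAt ℝ m g x := fun hm x =>
    ⟨(hf.of_le (by exact_mod_cast hm)).contDiffAt, (hg.of_le (by exact_mod_cast hm)).contDiffAt⟩
  have hA : ∀ r, r + 1 = k → (∀ j : Fin n, (j : ℕ) < r → lam j = 0) ∧
      ∀ j : Fin n, (j : ℕ) = r →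
        lam j = iteratedDeriv (r + 1) f a / (g a * iteratedDeriv r (q j) a) := by
    intro r hr
    exact coeff_of_deriv_div_eq_lincomb (ord := fun j : Fin n => (j : ℕ)) Fin.val_injective
      (fun j => (hqa j j.isLt).of_le (by exact_mod_cast (by omega : r ≤ n - 1)))
      (fun j => (hqzero j j.isLt).1) (fun j => (hqzero j j.isLt).2.1)
      (hcd (by omega) a).1 (hcd (by omega) a).2 hga (fun i hi => hfa i (by omega)) hG
  have hB : ∀ r, r + 1 = n - k → (∀ j : Fin n, n - 1 - (j : ℕ) < r → lam j = 0) ∧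
      ∀ j : Fin n, n - 1 - (j : ℕ) = r →
        lam j = iteratedDeriv (r + 1) f b / (g b * iteratedDeriv r (q j) b) := by
    intro r hr
    exact coeff_of_deriv_div_eq_lincomb (ord := fun j : Fin n => n - 1 - (j : ℕ))
      (fun i j h => Fin.ext (by have := i.isLt; have := j.isLt; simp only at h; omega))
      (fun j => (hqb j j.isLt).of_le (by exact_mod_cast (by omega : r ≤ n - 1)))
      (fun j => (hqzero j j.isLt).2.2.1) (fun j => (hqzero j j.isLt).2.2.2)
      (hcd (by omega) b).1 (hcd (by omega) b).2 hgb (fun i hi => hfb i (by omega)) hG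
  obtain hlt | hpred | heq | hgt : (j : ℕ) + 1 < k ∨ (j : ℕ) + 1 = k ∨ (j : ℕ) = k ∨ k < j := by
    omega
  · rw [(hA (k - 1) (by omega)).1 j (by omega), if_neg (by omega), if_neg (by omega), add_zero]
  · rw [(hA j hpred).2 j rfl, if_pos hpred, if_neg (by omega), add_zero, hc (by omega), ← hpred,
      Nat.add_sub_cancel]
  · have := (hB (n - 1 - k) (by omega)).2 j (by omega)
    rw [this, if_neg (by omega), if_pos heq, zero_add, hd (by omega), heq,
      show n - 1 - k + 1 = n - k by omega]
  · rw [(hB (n - 1 - k) (by omega)).1 j (by omega), if_neg (by omega), if_neg (by omega), add_zero]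

theorem bernstein_deriv_decomposition
    (n : ℕ) (a b : ℝ) (hab : a < b)
    (U : Submodule ℝ (ℝ → ℝ))
    (hUsmooth : ∀ f ∈ U, ContDiff ℝ (n : ℕ∞) f)
    (p : ℕ → ℝ → ℝ)
    (hpmem : ∀ k ≤ n, p k ∈ U)
    (hpzero : ∀ k ≤ n,
      (∀ j : ℕ, j < k → iteratedDeriv j (p k) a = 0) ∧
      iteratedDeriv k (p k) a ≠ 0 ∧
      (∀ j : ℕ, j < n - k → iteratedDeriv j (p k) b = 0) ∧
      iteratedDeriv (n - k) (p k) b ≠ 0)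
    (f₀ : ℝ → ℝ) (hf₀U : f₀ ∈ U)
    (hf₀pos : ∀ x ∈ Set.Icc a b, 0 < f₀ x)
    (q : ℕ → ℝ → ℝ)
    (hqmem : ∀ k < n, ∃ f ∈ U, q k = deriv (fun x => f x / f₀ x))
    (hqspan : ∀ f ∈ U,
      deriv (fun x => f x / f₀ x) ∈
        Submodule.span ℝ (Set.range (fun k : Fin n => q (k : ℕ))))
    (hqzero : ∀ k < n,
      (∀ j : ℕ, j < k → iteratedDeriv j (q k) a = 0) ∧
      iteratedDeriv k (q k) a ≠ 0 ∧
      (∀ j : ℕ, j < n - 1 - k → iteratedDeriv j (q k) b = 0) ∧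
      iteratedDeriv (n - 1 - k) (q k) b ≠ 0)
    (c d : ℕ → ℝ)
    (hc : ∀ k, 1 ≤ k → k ≤ n →
      c k = iteratedDeriv k (p k) a / (f₀ a * iteratedDeriv (k - 1) (q (k - 1)) a))
    (hd : ∀ k < n,
      d k = iteratedDeriv (n - k) (p k) b / (f₀ b * iteratedDeriv (n - 1 - k) (q k) b)) :
    (∀ k, 1 ≤ k → k ≤ n → c k ≠ 0) ∧
    (∀ k < n, d k ≠ 0) ∧
    (∀ k ≤ n, ∀ x ∈ Set.Icc a b,
      deriv (fun y => p k y / f₀ y) x =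
        c k * (if k = 0 then 0 else q (k - 1) x) + d k * (if k = n then 0 else q k x)) ∧
    (∀ k, 1 ≤ k → k ≤ n →
      Tendsto (fun x => deriv (p k) x / (f₀ a * q (k - 1) x)) (𝓝[>] a) (𝓝 (c k))) ∧
    (∀ k < n,
      Tendsto (fun x => deriv (p k) x / (f₀ b * q k x)) (𝓝[<] b) (𝓝 (d k))) := by
  have hfa : f₀ a ≠ 0 := (hf₀pos a (left_mem_Icc.2 hab.le)).ne'
  have hfb : f₀ b ≠ 0 := (hf₀pos b (right_mem_Icc.2 hab.le)).ne'
  have hU : ∀ f ∈ U, ∀ m ≤ n, ∀ x, ContDiffAt ℝ m f x := fun f hf m hm x =>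
    ((hUsmooth f hf).of_le (by exact_mod_cast hm)).contDiffAt
  have hq : ∀ j < n, ∀ x, f₀ x ≠ 0 → ContDiffAt ℝ (n - 1 : ℕ) (q j) x := by
    intro j hj x hx
    obtain ⟨f, hf, hqf⟩ := hqmem j hj
    rw [hqf]
    exact ((hU f hf n le_rfl x).div (hU f₀ hf₀U n le_rfl x) hx).derivWithin
      (by exact_mod_cast (by omega : n - 1 + 1 ≤ n))
  refine ⟨fun k h1 hk => ?_, fun k hk => ?_, fun k hk x _ => ?_, fun k h1 hk => ?_, fun k hk => ?_⟩
  · rw [hc k h1 hk]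
    exact div_ne_zero (hpzero k hk).2.1 (mul_ne_zero hfa (hqzero (k - 1) (by omega)).2.1)
  · rw [hd k hk]
    exact div_ne_zero (hpzero k hk.le).2.2.2 (mul_ne_zero hfb (hqzero k hk).2.2.2)
  · obtain ⟨lam, hlam⟩ := (Submodule.mem_span_range_iff_exists_fun ℝ).1 (hqspan _ (hpmem k hk))
    have hG : deriv (fun y => p k y / f₀ y) = fun x => ∑ j : Fin n, lam j * q j x := by
      rw [← hlam]
      ext
      simp
    rw [hG]
    simp only [bernstein_lincomb_coeff_eq hk (hUsmooth _ (hpmem k hk)) (hUsmooth f₀ hf₀U) hfa hfb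
      (hpzero k hk).1 (hpzero k hk).2.2.1 (fun j hj => hq j hj a hfa) (fun j hj => hq j hj b hfb)
      hqzero (hc k · hk) (hd k) hG]
    exact sum_fin_ite_adjacent_mul hk (c k) (d k) (fun j => q j x)
  · have := tendsto_deriv_div_const_mul (r := k - 1) (hU _ (hpmem k hk) _ (by omega) a)
      ((hq _ (by omega) a hfa).of_le (by exact_mod_cast (by omega)))
      (fun i hi => (hpzero k hk).1 i (by omega)) (hqzero _ (by omega)).1 hfa
      (hqzero _ (by omega)).2.1
    rw [Nat.sub_add_cancel h1, ← hc k h1 hk] at this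
    exact this.mono_left (nhdsWithin_mono _ fun x hx => hx.ne')
  · have := tendsto_deriv_div_const_mul (r := n - 1 - k) (hU _ (hpmem k hk.le) _ (by omega) b)
      ((hq k hk b hfb).of_le (by exact_mod_cast (by omega)))
      (fun i hi => (hpzero k hk.le).2.2.1 i (by omega)) (hqzero k hk).2.2.1 hfb
      (hqzero k hk).2.2.2
    rw [show n - 1 - k + 1 = n - k by omega, ← hd k hk] at this
    exact this.mono_left (nhdsWithin_mono _ fun x hx => hx.ne)
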